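/- Let (M,P,g) be a W̄₃-manifold of dimension 2n with closed 1-form θ. Then the curvature tensor R is a Riemannian P-tensor if and only if A(y,z) = -(θ(Ω)/4n)[g(y,z) + g(y,Pz)] for all y,z, where A(y,z) = (∇_y θ)z - (1/2n)θ(y)θ(z). -/

import Mathlib

open scoped BigOperators

/-- An abstract (local) model of a Riemannian almost product manifold of
dimension `n`: `V` plays the role of the module of smooth vector fields over
the commutative ℝ-algebra `C` of smooth functions, `g` is the Riemannian
metric, `P` the almost product structure, `D` the directional derivative of
functions, `bracket` the Lie bracket of vector fields, `nabla` the
Levi-Civita connection of `g`, and `e`, `e'` a frame together with its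
`g`-reciprocal frame (used to form traces `g^{ij}·`). -/
structure RAPM (n : ℕ) where
  V : Type
  C : Type
  [instAG : AddCommGroup V]
  [instCR : CommRing C]
  [instAlg : Algebra ℝ C]
  [instMod : Module C V]
  g : V →ₗ[C] V →ₗ[C] C
  P : V →ₗ[C] V
  gSymm : ∀ x y, g x y = g y x
  Pinvol : ∀ x, P (P x) = x
  Piso : ∀ x y, g (P x) (P y) = g x y
  D : V → C → C
  Dadd : ∀ x f h, D x (f + h) = D x f + D x h
  bracket : V → V → V
  bracketD : ∀ x y f, D (bracket x y) f = D x (D y f) - D y (D x f)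
  jacobi : ∀ x y z,
    bracket x (bracket y z) + bracket y (bracket z x) + bracket z (bracket x y) = 0
  nabla : V → V → V
  nabla_add₁ : ∀ x y z, nabla (x + y) z = nabla x z + nabla y z
  nabla_smul₁ : ∀ (f : C) x y, nabla (f • x) y = f • nabla x y
  nabla_add₂ : ∀ x y z, nabla x (y + z) = nabla x y + nabla x z
  nabla_leibniz : ∀ x (f : C) y, nabla x (f • y) = D x f • y + f • nabla x y
  nabla_metric : ∀ x y z, D x (g y z) = g (nabla x y) z + g y (nabla x z)
  torsion_free : ∀ x y, nabla x y - nabla y x = bracket x y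
  e : Fin n → V
  e' : Fin n → V
  dual_frame : ∀ i j, g (e' i) (e j) = if i = j then 1 else 0
  frame_span : ∀ v : V, v = ∑ i, g (e' i) v • e i

namespace RAPM

attribute [instance] RAPM.instAG RAPM.instCR RAPM.instAlg RAPM.instMod

variable {n : ℕ} (Q : RAPM n)

/-- The fundamental tensor `F(x,y,z) = g((∇ₓP)y, z)`. -/
def F (x y z : Q.V) : Q.C := Q.g (Q.nabla x (Q.P y) - Q.P (Q.nabla x y)) z

/-- The curvature operator `R(x,y)z`. -/
def R (x y z : Q.V) : Q.V :=
  Q.nabla x (Q.nabla y z) - Q.nabla y (Q.nabla x z) - Q.nabla (Q.bracket x y) z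

/-- The (0,4) curvature tensor `R(x,y,z,w) = g(R(x,y)z, w)`. -/
def Rm (x y z w : Q.V) : Q.C := Q.g (Q.R x y z) w

/-- `tr P = g^{ij} g(e_i, P e_j)`. -/
def trP : Q.C := ∑ i, Q.g (Q.e' i) (Q.P (Q.e i))

/-- The Lee form `θ(x) = g^{ij} F(e_i, e_j, x)`. -/
def theta (x : Q.V) : Q.C := ∑ i, Q.F (Q.e' i) (Q.e i) x

/-- The covariant derivative `(∇ₓθ)y`. -/
def nablaTheta (x y : Q.V) : Q.C := Q.D x (Q.theta y) - Q.theta (Q.nabla x y)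

/-- `θ` is closed iff `(∇ₓθ)y = (∇_yθ)x`. -/
def closed : Prop := ∀ x y, Q.nablaTheta x y = Q.nablaTheta y x

/-- The covariant derivative `(∇ₓF)(y,z,w)`. -/
def nablaF (x y z w : Q.V) : Q.C :=
  Q.D x (Q.F y z w) - Q.F (Q.nabla x y) z w - Q.F y (Q.nabla x z) w
    - Q.F y z (Q.nabla x w)

def psi1 (S : Q.V → Q.V → Q.C) (x y z w : Q.V) : Q.C :=
  Q.g y z * S x w - Q.g x z * S y w + S y z * Q.g x w - S x z * Q.g y w

def psi2 (S : Q.V → Q.V → Q.C) (x y z w : Q.V) : Q.C :=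
  Q.psi1 S x y (Q.P z) (Q.P w)

/-- The associated metric `g̃(x,y) = g(x,Py)`. -/
def gP (x y : Q.V) : Q.C := Q.g x (Q.P y)

noncomputable def pi1 (x y z w : Q.V) : Q.C :=
  ((1 : ℝ)/2) • Q.psi1 (fun a b => Q.g a b) x y z w

noncomputable def pi2 (x y z w : Q.V) : Q.C :=
  ((1 : ℝ)/2) • Q.psi2 (fun a b => Q.g a b) x y z w

def pi3 (x y z w : Q.V) : Q.C := Q.psi1 Q.gP x y z w

/-- The Ricci tensor `ρ(L)(y,z) = g^{ij} L(e_i,y,z,e_j)` of a (0,4)-tensor. -/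
def ric (L : Q.V → Q.V → Q.V → Q.V → Q.C) (y z : Q.V) : Q.C :=
  ∑ i, L (Q.e' i) y z (Q.e i)

/-- The scalar curvature `τ(L) = g^{ij} ρ(L)(e_i,e_j)`. -/
def scal (L : Q.V → Q.V → Q.V → Q.V → Q.C) : Q.C := ∑ i, Q.ric L (Q.e i) (Q.e' i)

/-- The associated Ricci tensor `ρ*(L)(y,z) = g^{ij} L(e_i,y,z,Pe_j)`. -/
def ricStar (L : Q.V → Q.V → Q.V → Q.V → Q.C) (y z : Q.V) : Q.C :=
  ∑ i, L (Q.e' i) y z (Q.P (Q.e i))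

/-- The associated scalar curvature `τ*(L)`. -/
def scalStar (L : Q.V → Q.V → Q.V → Q.V → Q.C) : Q.C :=
  ∑ i, Q.ricStar L (Q.e i) (Q.e' i)

/-- The trace `g^{ij} S(e_i,e_j)` of a (0,2)-tensor. -/
def trB (S : Q.V → Q.V → Q.C) : Q.C := ∑ i, S (Q.e i) (Q.e' i)

/-- The divergence of a vector field. -/
def divg (v : Q.V) : Q.C := ∑ i, Q.g (Q.e' i) (Q.nabla (Q.e i) v)

/-- A curvature-like tensor. -/
def curvatureLike (L : Q.V → Q.V → Q.V → Q.V → Q.C) : Prop :=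
  (∀ x y z w, L x y z w = - L y x z w) ∧
  (∀ x y z w, L x y z w = - L x y w z) ∧
  (∀ x y z w, L x y z w + L y z x w + L z x y w = 0)

/-- A Riemannian P-tensor. -/
def isPtensor (L : Q.V → Q.V → Q.V → Q.V → Q.C) : Prop :=
  Q.curvatureLike L ∧ ∀ x y z w, L x y (Q.P z) (Q.P w) = L x y z w

/-- The defining condition of the Naveira class `W̄₃` (dimension `n`, so the
factor `1/(2n)` of the paper is `1/n` here). -/
def W3 : Prop :=
  (∀ x y z, Q.F x y z =
    ((1 : ℝ)/(n : ℝ)) • ((Q.g x y + Q.g x (Q.P y)) * Q.theta z +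
      (Q.g x z + Q.g x (Q.P z)) * Q.theta y)) ∧
  (∀ x, Q.theta (Q.P x) = - Q.theta x)

/-- The defining condition of the Naveira class `W̄₆`. -/
def W6 : Prop :=
  (∀ x y z, Q.F x y z =
    ((1 : ℝ)/(n : ℝ)) • ((Q.g x y - Q.g x (Q.P y)) * Q.theta z +
      (Q.g x z - Q.g x (Q.P z)) * Q.theta y)) ∧
  (∀ x, Q.theta (Q.P x) = Q.theta x)

end RAPM

/-!
Differentiating the `W̄₃` formula `F = (1/2n)[(g + g̃) ⊗ θ + …]` and inserting it into the Ricci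
identity `R(x,y,Pz,Pw) - R(x,y,z,w) = (∇ₓF)(y,z,Pw) - (∇_yF)(x,z,Pw)` shows that this defect is
`1/(2n)` times the Kulkarni–Nomizu product `(g + g̃) ⊙ A'` with `A' = A + θ(Ω)/(4n)·(g + g̃)`.
Closedness of `θ` makes `A'` symmetric, and `θ ∘ P = -θ` gives `A'(·, P·) = -A'`. Contracting
`(g + g̃) ⊙ A' = 0` once gives `2n·A' = -(tr A')(g + g̃)`, and contracting again (with `tr P = 0`)
gives `tr A' = 0`, hence `A' = 0`.
-/

def kulkarniNomizu {V C : Type*} [CommRing C] (S T : V → V → C) (x y z w : V) : C :=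
  S x z * T y w - S y z * T x w + S y w * T x z - S x w * T y z

lemma eq_zero_of_natCast_mul_eq_zero {C : Type*} [Ring C] [Algebra ℝ C] {k : ℕ} (hk : k ≠ 0)
    {c : C} (h : (k : C) * c = 0) : c = 0 := by
  rw [← map_natCast (algebraMap ℝ C), ← Algebra.smul_def] at h
  exact (smul_eq_zero.mp h).resolve_left (Nat.cast_ne_zero.mpr hk)

lemma algebraMap_one_div_two_mul_mul_two {C : Type*} [Semiring C] [Algebra ℝ C] {m : ℕ} :
    algebraMap ℝ C (1 / (2 * m)) * 2 = algebraMap ℝ C (1 / m) := by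
  rw [← map_ofNat (algebraMap ℝ C) 2, ← map_mul]
  congr 1
  ring

namespace RAPM

variable {m : ℕ}

section General

variable (Q : RAPM m)

def gPlus (a b : Q.V) : Q.C := Q.g a b + Q.g a (Q.P b)

lemma nabla_sub_left (u v z : Q.V) : Q.nabla (u - v) z = Q.nabla u z - Q.nabla v z :=
  map_sub (AddMonoidHom.mk' (Q.nabla · z) (Q.nabla_add₁ · · z)) u v

lemma nabla_neg_right (x v : Q.V) : Q.nabla x (-v) = -Q.nabla x v :=
  map_neg (AddMonoidHom.mk' (Q.nabla x) (Q.nabla_add₂ x)) v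

lemma nabla_sub_right (x u v : Q.V) : Q.nabla x (u - v) = Q.nabla x u - Q.nabla x v :=
  map_sub (AddMonoidHom.mk' (Q.nabla x) (Q.nabla_add₂ x)) u v

lemma D_one_div_natCast_smul (x : Q.V) (k : ℕ) (c : Q.C) :
    Q.D x (((1 : ℝ) / k) • c) = ((1 : ℝ) / k) • Q.D x c := by
  simpa only [one_div, AddMonoidHom.mk'_apply] using
    map_inv_natCast_smul (AddMonoidHom.mk' (Q.D x) (Q.Dadd x)) ℝ ℝ k c

lemma g_P_left (a b : Q.V) : Q.g (Q.P a) b = Q.g a (Q.P b) := by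
  simpa only [Q.Pinvol] using Q.Piso a (Q.P b)

lemma eq_of_forall_g_eq {a b : Q.V} (h : ∀ v, Q.g a v = Q.g b v) : a = b := by
  rw [Q.frame_span a, Q.frame_span b]
  simp only [Q.gSymm _ a, Q.gSymm _ b, h]

lemma sum_g_dual_mul_g (u v : Q.V) : ∑ i, Q.g (Q.e' i) u * Q.g v (Q.e i) = Q.g v u := by
  conv_rhs => rw [Q.frame_span u]
  simp only [map_sum, map_smul, smul_eq_mul]

lemma sum_g_dual_frame : ∑ i, Q.g (Q.e' i) (Q.e i) = m := by
  simp [Q.dual_frame]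

lemma D_g_mul_g (x a b c d : Q.V) :
    Q.D x (Q.g a b * Q.g c d) =
      (Q.g (Q.nabla x a) b + Q.g a (Q.nabla x b)) * Q.g c d
        + Q.g a b * (Q.g (Q.nabla x c) d + Q.g c (Q.nabla x d)) := by
  have h : Q.g a b * Q.g c d = Q.g a (Q.g c d • b) := by
    rw [map_smul, smul_eq_mul, mul_comm]
  rw [h, Q.nabla_metric, Q.nabla_leibniz, Q.nabla_metric x c d]
  simp only [map_add, map_smul, smul_eq_mul]
  ring

lemma gPlus_comm (a b : Q.V) : Q.gPlus a b = Q.gPlus b a := by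
  rw [gPlus, gPlus, Q.gSymm a b, ← g_P_left, Q.gSymm (Q.P a)]

lemma gPlus_P_right (a b : Q.V) : Q.gPlus a (Q.P b) = Q.gPlus a b := by
  rw [gPlus, gPlus, Q.Pinvol, add_comm]

lemma sum_gPlus_dual_frame (htr : Q.trP = 0) : ∑ i, Q.gPlus (Q.e' i) (Q.e i) = m := by
  rw [← add_zero (m : Q.C), ← htr, ← sum_g_dual_frame]
  exact Finset.sum_add_distrib

lemma sum_gPlus_dual_mul_g (u v : Q.V) :
    ∑ i, Q.gPlus (Q.e' i) u * Q.g v (Q.e i) = Q.g v u + Q.g v (Q.P u) := by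
  simp only [gPlus, add_mul, Finset.sum_add_distrib, sum_g_dual_mul_g]

lemma sum_gPlus_mul_g_dual (y u : Q.V) :
    ∑ i, Q.gPlus y (Q.e i) * Q.g u (Q.e' i) = Q.gPlus u y := by
  simp only [gPlus, ← g_P_left, ← LinearMap.add_apply, ← map_add, Q.gSymm u, mul_comm _ (Q.g _ u),
    sum_g_dual_mul_g]

lemma bracket_eq (x y : Q.V) : Q.bracket x y = Q.nabla x y - Q.nabla y x :=
  (Q.torsion_free x y).symm

lemma R_swap (x y z : Q.V) : Q.R x y z = -Q.R y x z := by
  simp only [R, bracket_eq, nabla_sub_left]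
  abel

lemma R_bianchi (x y z : Q.V) : Q.R x y z + Q.R y z x + Q.R z x y = 0 := by
  rw [← Q.jacobi x y z]
  simp only [R, bracket_eq, nabla_sub_left, nabla_sub_right]
  abel

lemma Rm_swap_left (x y z w : Q.V) : Q.Rm x y z w = -Q.Rm y x z w := by
  rw [Rm, Rm, R_swap, map_neg, LinearMap.neg_apply]

lemma Rm_swap_right (x y z w : Q.V) : Q.Rm x y z w = -Q.Rm x y w z := by
  have h := Q.bracketD x y (Q.g z w)
  simp only [Q.nabla_metric, Q.Dadd] at h
  simp only [Rm, R, map_sub, LinearMap.sub_apply]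
  rw [Q.gSymm (Q.nabla x (Q.nabla y w)) z, Q.gSymm (Q.nabla y (Q.nabla x w)) z,
    Q.gSymm (Q.nabla (Q.bracket x y) w) z]
  linear_combination -h

lemma Rm_bianchi (x y z w : Q.V) : Q.Rm x y z w + Q.Rm y z x w + Q.Rm z x y w = 0 := by
  simp only [Rm, ← LinearMap.add_apply, ← map_add, R_bianchi, map_zero, LinearMap.zero_apply]

lemma Rm_curvatureLike : Q.curvatureLike Q.Rm :=
  ⟨Q.Rm_swap_left, Q.Rm_swap_right, Q.Rm_bianchi⟩

lemma R_P (x y z : Q.V) :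
    Q.R x y (Q.P z) = Q.P (Q.R x y z)
      + (Q.nabla x (Q.nabla y (Q.P z) - Q.P (Q.nabla y z))
          + (Q.nabla x (Q.P (Q.nabla y z)) - Q.P (Q.nabla x (Q.nabla y z)))
          - Q.nabla y (Q.nabla x (Q.P z) - Q.P (Q.nabla x z))
          - (Q.nabla y (Q.P (Q.nabla x z)) - Q.P (Q.nabla y (Q.nabla x z)))
          - (Q.nabla (Q.bracket x y) (Q.P z) - Q.P (Q.nabla (Q.bracket x y) z))) := by
  simp only [R, map_sub, nabla_sub_right]
  abel

lemma Rm_P_sub_Rm (x y z w : Q.V) :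
    Q.Rm x y (Q.P z) (Q.P w) - Q.Rm x y z w =
      Q.nablaF x y z (Q.P w) - Q.nablaF y x z (Q.P w) := by
  simp only [nablaF, F, Q.nabla_metric]
  simp only [Rm, R_P, bracket_eq, map_add, map_sub, LinearMap.add_apply, LinearMap.sub_apply,
    nabla_sub_left, Q.Piso]
  ring

lemma eq_zero_of_kulkarniNomizu_gPlus_eq_zero (hm : m ≠ 0) (htr : Q.trP = 0)
    {T : Q.V → Q.V → Q.C} (hrep : ∀ a, ∃ v, ∀ b, T a b = Q.g v b)
    (hcomm : ∀ a b, T a b = T b a) (hP : ∀ a b, T a (Q.P b) = -T a b)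
    (hKN : ∀ x y z w, kulkarniNomizu Q.gPlus T x y z w = 0) (a b : Q.V) : T a b = 0 := by
  choose γ hγ using hrep
  have contract : ∀ y z, (m : Q.C) * T y z = -(Q.gPlus y z * ∑ i, T (Q.e' i) (Q.e i)) := by
    intro y z
    have h := Finset.sum_eq_zero fun i (_ : i ∈ Finset.univ) => hKN (Q.e' i) y z (Q.e i)
    have h₁ : ∑ i, Q.gPlus (Q.e' i) z * T y (Q.e i) = 0 := by
      simp only [hγ y]
      rw [sum_gPlus_dual_mul_g, ← hγ, ← hγ, hP, add_neg_cancel]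
    have h₃ : ∑ i, Q.gPlus y (Q.e i) * T (Q.e' i) z = 0 := by
      rw [Finset.sum_congr rfl fun i _ => by rw [hcomm, hγ z], sum_gPlus_mul_g_dual, gPlus,
        ← hγ, ← hγ, hP, add_neg_cancel]
    simp only [kulkarniNomizu, Finset.sum_add_distrib, Finset.sum_sub_distrib, h₁, h₃,
      ← Finset.mul_sum, ← Finset.sum_mul, Q.sum_gPlus_dual_frame htr] at h
    linear_combination -h
  have htrace : ∑ i, T (Q.e' i) (Q.e i) = 0 := by
    have h : ((2 * m : ℕ) : Q.C) * ∑ i, T (Q.e' i) (Q.e i) = 0 := by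
      have h' := Finset.sum_congr rfl fun i (_ : i ∈ Finset.univ) => contract (Q.e' i) (Q.e i)
      rw [← Finset.mul_sum, Finset.sum_neg_distrib, ← Finset.sum_mul,
        Q.sum_gPlus_dual_frame htr] at h'
      push_cast
      linear_combination h'
    exact eq_zero_of_natCast_mul_eq_zero (by omega) h
  exact eq_zero_of_natCast_mul_eq_zero hm (by rw [contract, htrace, mul_zero, neg_zero])

/-- With `θ = g(Ω, ·)` and `m = 2n`, this is `A(a,b) + θ(Ω)/(4n)·[g(a,b) + g(a,Pb)]`. -/
noncomputable def shiftedA (Ω a b : Q.V) : Q.C :=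
  Q.g (Q.nabla a Ω) b - ((1 : ℝ) / m) • (Q.g Ω a * Q.g Ω b)
    + ((1 : ℝ) / (2 * m)) • (Q.g Ω Ω * Q.gPlus a b)

end General

variable {Q : RAPM m} {Ω : Q.V}

section W3

variable (hW : Q.W3) (hΩ : ∀ x, Q.g Ω x = Q.theta x)
include hW hΩ

lemma F_eq_of_W3 (a b c : Q.V) :
    Q.F a b c = ((1 : ℝ) / m) • (Q.gPlus a b * Q.g Ω c + Q.gPlus a c * Q.g Ω b) := by
  rw [hW.1, hΩ, hΩ]
  rfl

lemma g_Omega_P (v : Q.V) : Q.g Ω (Q.P v) = -Q.g Ω v := by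
  rw [hΩ, hΩ, hW.2]

lemma P_Omega : Q.P Ω = -Ω :=
  Q.eq_of_forall_g_eq fun v => by
    rw [g_P_left, g_Omega_P hW hΩ, map_neg, LinearMap.neg_apply]

lemma g_nabla_Omega_P (x w : Q.V) :
    Q.g (Q.nabla x Ω) (Q.P w) =
      -Q.g (Q.nabla x Ω) w - ((1 : ℝ) / m) • (Q.gPlus x w * Q.g Ω Ω) := by
  have h := F_eq_of_W3 hW hΩ x Ω w
  have hxΩ : Q.gPlus x Ω = 0 := by rw [gPlus, P_Omega hW hΩ, map_neg, add_neg_cancel]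
  rw [F, P_Omega hW hΩ, nabla_neg_right, hxΩ, zero_mul, zero_add] at h
  rw [← g_P_left, ← h]
  simp only [map_sub, map_neg, LinearMap.sub_apply, LinearMap.neg_apply]
  ring

lemma nablaF_eq_of_W3 (x y z w : Q.V) :
    Q.nablaF x y z w = ((1 : ℝ) / m) •
      (Q.gPlus y z * Q.g (Q.nabla x Ω) w + Q.gPlus y w * Q.g (Q.nabla x Ω) z
        + Q.F x z y * Q.g Ω w + Q.F x w y * Q.g Ω z) := by
  rw [F.eq_1 Q x z y, F.eq_1 Q x w y, Q.gSymm _ y, Q.gSymm _ y, nablaF]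
  simp only [F_eq_of_W3 hW hΩ, D_one_div_natCast_smul]
  simp only [map_sub, gPlus, add_mul, Q.Dadd, D_g_mul_g, Algebra.smul_def]
  ring

lemma Rm_P_sub_Rm_of_W3 (x y z w : Q.V) :
    Q.Rm x y (Q.P z) (Q.P w) - Q.Rm x y z w =
      ((1 : ℝ) / m) • kulkarniNomizu Q.gPlus (Q.shiftedA Ω) x y z w := by
  rw [Rm_P_sub_Rm, nablaF_eq_of_W3 hW hΩ, nablaF_eq_of_W3 hW hΩ]
  simp only [F_eq_of_W3 hW hΩ, g_nabla_Omega_P hW hΩ, g_Omega_P hW hΩ, gPlus_P_right,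
    kulkarniNomizu, shiftedA, Algebra.smul_def, ← algebraMap_one_div_two_mul_mul_two]
  rw [Q.gPlus_comm y x]
  ring

lemma shiftedA_P_right (a b : Q.V) :
    Q.shiftedA Ω a (Q.P b) = -Q.shiftedA Ω a b := by
  simp only [shiftedA, g_nabla_Omega_P hW hΩ, g_Omega_P hW hΩ, gPlus_P_right, Algebra.smul_def,
    ← algebraMap_one_div_two_mul_mul_two]
  ring

lemma isPtensor_Rm_iff_of_W3 (hm : m ≠ 0) :
    Q.isPtensor Q.Rm ↔ ∀ x y z w, kulkarniNomizu Q.gPlus (Q.shiftedA Ω) x y z w = 0 := by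
  have hm' : (1 : ℝ) / m ≠ 0 := by positivity
  refine (and_iff_right Q.Rm_curvatureLike).trans (forall₄_congr fun x y z w => ?_)
  rw [← sub_eq_zero, Rm_P_sub_Rm_of_W3 hW hΩ, smul_eq_zero, or_iff_right hm']

end W3

lemma nablaTheta_eq (hΩ : ∀ x, Q.g Ω x = Q.theta x) (a b : Q.V) :
    Q.nablaTheta a b = Q.g (Q.nabla a Ω) b := by
  rw [nablaTheta, ← hΩ, ← hΩ, Q.nabla_metric]
  ring

lemma shiftedA_eq (hΩ : ∀ x, Q.g Ω x = Q.theta x) (a b : Q.V) :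
    Q.shiftedA Ω a b = Q.nablaTheta a b - ((1 : ℝ) / m) • (Q.theta a * Q.theta b)
      + ((1 : ℝ) / (2 * m)) • (Q.theta Ω * Q.gPlus a b) := by
  rw [shiftedA, nablaTheta_eq hΩ, hΩ, hΩ, hΩ]

lemma shiftedA_comm (hθ : Q.closed) (hΩ : ∀ x, Q.g Ω x = Q.theta x) (a b : Q.V) :
    Q.shiftedA Ω a b = Q.shiftedA Ω b a := by
  rw [shiftedA_eq hΩ, shiftedA_eq hΩ, hθ a b, mul_comm (Q.theta a), Q.gPlus_comm]

lemma exists_shiftedA_eq_g (a : Q.V) : ∃ v, ∀ b, Q.shiftedA Ω a b = Q.g v b :=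
  ⟨Q.nabla a Ω - (algebraMap ℝ Q.C (1 / m) * Q.g Ω a) • Ω
      + (algebraMap ℝ Q.C (1 / (2 * m)) * Q.g Ω Ω) • (a + Q.P a), fun b => by
    simp only [shiftedA, gPlus, map_add, map_sub, map_smul, LinearMap.add_apply,
      LinearMap.sub_apply, LinearMap.smul_apply, smul_eq_mul, g_P_left]
    simp only [Algebra.smul_def]
    ring⟩

end RAPM

open RAPM in
/-- On a `W̄₃`-manifold of dimension `2n` with closed `θ`, `R` is a Riemannian
P-tensor iff `A(y,z) = -(θ(Ω)/4n)[g(y,z)+g(y,Pz)]`. -/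
theorem statement16 {n : ℕ} (hn : 0 < n) (Q : RAPM (2*n)) (htr : Q.trP = 0)
    (hW : Q.W3) (hθ : Q.closed) (Ω : Q.V) (hΩ : ∀ x, Q.g Ω x = Q.theta x)
    (A : Q.V → Q.V → Q.C)
    (hA : ∀ y z, A y z =
      Q.nablaTheta y z - ((1 : ℝ)/(2*(n : ℝ))) • (Q.theta y * Q.theta z)) :
    Q.isPtensor Q.Rm ↔
      ∀ y z, A y z =
        - (((1 : ℝ)/(4*(n : ℝ))) •
          (Q.theta Ω * (Q.g y z + Q.g y (Q.P z)))) := by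
  have hm : 2 * n ≠ 0 := by omega
  have hshift : ∀ y z, Q.shiftedA Ω y z =
      A y z + ((1 : ℝ) / (4 * n)) • (Q.theta Ω * (Q.g y z + Q.g y (Q.P z))) := by
    intro y z
    rw [shiftedA_eq hΩ, hA, show (2 : ℝ) * ((2 * n : ℕ) : ℝ) = 4 * n by push_cast; ring]
    push_cast
    rfl
  rw [isPtensor_Rm_iff_of_W3 hW hΩ hm]
  refine ⟨fun hKN y z => ?_, fun hA' x y z w => ?_⟩
  · rw [eq_neg_iff_add_eq_zero, ← hshift]
    exact Q.eq_zero_of_kulkarniNomizu_gPlus_eq_zero hm htr exists_shiftedA_eq_g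
      (shiftedA_comm hθ hΩ) (shiftedA_P_right hW hΩ) hKN y z
  · have hzero : ∀ a b, Q.shiftedA Ω a b = 0 := fun a b => by
      rw [hshift, hA', neg_add_cancel]
    simp only [kulkarniNomizu, hzero, mul_zero, sub_zero, add_zero]
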